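/- Let E be a real inner product space and F : E → ℝ a differentiable function whose gradient ∇F is L-Lipschitz for some L ≥ 0. Let Θ ∈ E and set u = ∇F(Θ). Let Δ, R ∈ E, γ ≥ 0, β ∈ ℝ, η ≥ 0, and B ≥ 0 with ‖Δ‖² ≤ B and ‖R‖² ≤ B, and define Θ' = Θ − η·(γ·(u + Δ) + β²·R). Then F(Θ') − F(Θ) ≤ ((3/2)·L·η²·γ² − (η/2)·(γ − β²))·‖u‖² + ((η/2)·(γ + β²) + (3L/2)·η²·(γ² + β⁴))·B. -/

import Mathlib

/-!
By the descent lemma for an `L`-smooth function, the step `Θ' - Θ = -η • w` with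
`w = γ • (u + Δ) + β ^ 2 • R` changes `F` by at most `-η ⟪u, w⟫ + (L / 2) η² ‖w‖²`.
The cross terms `⟪u, Δ⟫` and `⟪u, R⟫` are absorbed by Young's inequality, and `‖w‖²` by
`‖a + b + c‖² ≤ 3 (‖a‖² + ‖b‖² + ‖c‖²)`, which is where the factor `3 / 2` comes from.
-/

open scoped RealInnerProductSpace

section Descent

variable {E : Type*} [NormedAddCommGroup E] [InnerProductSpace ℝ E] [CompleteSpace E]
  {F : E → ℝ}

theorem hasDerivAt_apply_add_smul_of_differentiable (hF : Differentiable ℝ F) (x v : E) (t : ℝ) :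
    HasDerivAt (fun s : ℝ => F (x + s • v)) ⟪gradient F (x + t • v), v⟫ t := by
  have hline : HasDerivAt (fun s : ℝ => x + s • v) v t := by
    simpa using ((hasDerivAt_id t).smul_const v).const_add x
  exact (hF _).hasGradientAt.hasFDerivAt.comp_hasDerivAt t hline

theorem apply_add_le_of_lipschitz_gradient (hF : Differentiable ℝ F) {L : ℝ}
    (hLip : ∀ x y : E, ‖gradient F x - gradient F y‖ ≤ L * ‖x - y‖) (x v : E) :
    F (x + v) ≤ F x + ⟪gradient F x, v⟫ + L / 2 * ‖v‖ ^ 2 := by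
  -- `ψ` is antitone on `[0, ∞)`; comparing `ψ 1` with `ψ 0` is the claim.
  set ψ : ℝ → ℝ := fun t => F (x + t • v) - t * ⟪gradient F x, v⟫ - L / 2 * t ^ 2 * ‖v‖ ^ 2
  have hψ : ∀ t, HasDerivAt ψ
      (⟪gradient F (x + t • v), v⟫ - ⟪gradient F x, v⟫ - L * t * ‖v‖ ^ 2) t := by
    intro t
    refine (((hasDerivAt_apply_add_smul_of_differentiable hF x v t).sub
      ((hasDerivAt_id t).mul_const ⟪gradient F x, v⟫)).sub
      (((hasDerivAt_pow 2 t).const_mul (L / 2)).mul_const (‖v‖ ^ 2))).congr_deriv ?_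
    ring
  have hψ_nonpos : ∀ t ∈ interior (Set.Ici (0 : ℝ)), deriv ψ t ≤ 0 := by
    intro t ht
    rw [interior_Ici, Set.mem_Ioi] at ht
    have hgrad : ‖gradient F (x + t • v) - gradient F x‖ ≤ L * (t * ‖v‖) := by
      simpa [norm_smul, abs_of_pos ht] using hLip (x + t • v) x
    have hinner := real_inner_le_norm (gradient F (x + t • v) - gradient F x) v
    rw [inner_sub_left] at hinner
    rw [(hψ t).deriv]
    nlinarith [mul_le_mul_of_nonneg_right hgrad (norm_nonneg v)]
  have hψ_anti : AntitoneOn ψ (Set.Ici 0) :=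
    antitoneOn_of_deriv_nonpos (convex_Ici 0) (fun t _ => (hψ t).continuousAt.continuousWithinAt)
      (fun t _ => (hψ t).differentiableAt.differentiableWithinAt) hψ_nonpos
  have hψ_one := hψ_anti Set.self_mem_Ici (Set.mem_Ici.2 zero_le_one) zero_le_one
  simp only [ψ, one_smul, zero_smul, add_zero] at hψ_one
  linarith

end Descent

theorem neg_real_inner_le_half_add_sq {E : Type*} [NormedAddCommGroup E] [InnerProductSpace ℝ E]
    (x y : E) : -⟪x, y⟫ ≤ (‖x‖ ^ 2 + ‖y‖ ^ 2) / 2 := by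
  nlinarith [norm_add_sq_real x y, sq_nonneg ‖x + y‖]

theorem norm_add₃_sq_le {E : Type*} [SeminormedAddCommGroup E] (a b c : E) :
    ‖a + b + c‖ ^ 2 ≤ 3 * (‖a‖ ^ 2 + ‖b‖ ^ 2 + ‖c‖ ^ 2) := by
  have h := norm_add₃_le (a := a) (b := b) (c := c)
  nlinarith [norm_nonneg (a + b + c), sq_nonneg (‖a‖ - ‖b‖), sq_nonneg (‖b‖ - ‖c‖),
    sq_nonneg (‖a‖ - ‖c‖)]

theorem per_step_descent_general
    {E : Type*} [NormedAddCommGroup E] [InnerProductSpace ℝ E] [CompleteSpace E]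
    (F : E → ℝ) (L : ℝ) (hL : 0 ≤ L)
    (hF : Differentiable ℝ F)
    (hLip : ∀ x y : E, ‖gradient F x - gradient F y‖ ≤ L * ‖x - y‖)
    (Θ : E) (u : E) (hu : u = gradient F Θ)
    (Δ R : E) (γ β η B : ℝ) (hγ : 0 ≤ γ) (hη : 0 ≤ η)
    (hΔ : ‖Δ‖ ^ 2 ≤ B) (hR : ‖R‖ ^ 2 ≤ B)
    (Θ' : E) (hΘ' : Θ' = Θ - η • (γ • (u + Δ) + β ^ 2 • R)) :
    F Θ' - F Θ
      ≤ ((3 / 2) * L * η ^ 2 * γ ^ 2 - (η / 2) * (γ - β ^ 2)) * ‖u‖ ^ 2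
        + ((η / 2) * (γ + β ^ 2) + (3 * L / 2) * η ^ 2 * (γ ^ 2 + β ^ 4)) * B := by
  set w : E := γ • u + γ • Δ + β ^ 2 • R
  have hstep : Θ' = Θ + -(η • w) := by
    rw [hΘ', smul_add γ u Δ]; abel
  have hdescent := apply_add_le_of_lipschitz_gradient hF hLip Θ (-(η • w))
  rw [← hstep, ← hu] at hdescent
  have hinner : ⟪u, -(η • w)⟫ = -η * (γ * ‖u‖ ^ 2 + γ * ⟪u, Δ⟫ + β ^ 2 * ⟪u, R⟫) := by
    simp only [w, inner_neg_right, inner_smul_right, inner_add_right, real_inner_self_eq_norm_sq]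
    ring
  have hw : ‖w‖ ^ 2 ≤ 3 * (γ ^ 2 * ‖u‖ ^ 2 + γ ^ 2 * B + β ^ 4 * B) := by
    have h := norm_add₃_sq_le (γ • u) (γ • Δ) (β ^ 2 • R)
    simp only [norm_smul, mul_pow, Real.norm_eq_abs, sq_abs] at h
    have hΔR : γ ^ 2 * ‖Δ‖ ^ 2 + (β ^ 2) ^ 2 * ‖R‖ ^ 2 ≤ γ ^ 2 * B + (β ^ 2) ^ 2 * B := by
      gcongr
    linarith
  have hnorm : ‖-(η • w)‖ ^ 2 = η ^ 2 * ‖w‖ ^ 2 := by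
    rw [norm_neg, norm_smul, mul_pow, Real.norm_eq_abs, sq_abs]
  have hcrossΔ : -⟪u, Δ⟫ ≤ (‖u‖ ^ 2 + B) / 2 := by linarith [neg_real_inner_le_half_add_sq u Δ]
  have hcrossR : -⟪u, R⟫ ≤ (‖u‖ ^ 2 + B) / 2 := by linarith [neg_real_inner_le_half_add_sq u R]
  rw [hinner, hnorm] at hdescent
  linarith [mul_le_mul_of_nonneg_left hcrossΔ (mul_nonneg hη hγ),
    mul_le_mul_of_nonneg_left hcrossR (mul_nonneg hη (sq_nonneg β)),
    mul_le_mul_of_nonneg_left hw (by positivity : 0 ≤ L / 2 * η ^ 2)]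

/-- Per-step descent inequality for one global-server update of HALoS. -/
theorem per_step_descent
    {E : Type*} [NormedAddCommGroup E] [InnerProductSpace ℝ E] [CompleteSpace E]
    (F : E → ℝ) (L : ℝ) (hL : 0 ≤ L)
    (hF : Differentiable ℝ F)
    (hLip : ∀ x y : E, ‖gradient F x - gradient F y‖ ≤ L * ‖x - y‖)
    (Θ : E) (u : E) (hu : u = gradient F Θ)
    (Δ R : E) (γ β η B : ℝ) (hγ : 0 ≤ γ) (hη : 0 ≤ η) (hB : 0 ≤ B)
    (hΔ : ‖Δ‖ ^ 2 ≤ B) (hR : ‖R‖ ^ 2 ≤ B)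
    (Θ' : E) (hΘ' : Θ' = Θ - η • (γ • (u + Δ) + β ^ 2 • R)) :
    F Θ' - F Θ
      ≤ ((3 / 2) * L * η ^ 2 * γ ^ 2 - (η / 2) * (γ - β ^ 2)) * ‖u‖ ^ 2
        + ((η / 2) * (γ + β ^ 2) + (3 * L / 2) * η ^ 2 * (γ ^ 2 + β ^ 4)) * B :=
  per_step_descent_general F L hL hF hLip Θ u hu Δ R γ β η B hγ hη hΔ hR Θ' hΘ'
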